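/- arXiv:0908.4101 — 6 statements merged into one kernel-verified Lean document; each statement's English description precedes it below -/
import Mathlib

section
/- Let X be a set and b : X⁴ → ℝ a function satisfying the multiplicative cocycle identity b(x,y,z,t) = b(x,y,z,w)·b(x,w,z,t) for all x,y,z,t,w ∈ X. Let g : X → X be a map leaving b invariant (b(g x, g y, g z, g t) = b(x,y,z,t) for all x,y,z,t ∈ X) and fixing two points x⁻, x⁺ ∈ X (g x⁻ = x⁻ and g x⁺ = x⁺). Then the function F : X → ℝ, F(y) = b(x⁻, y, x⁺, g y), is constant: F(y) = F(z) for all y, z ∈ X. -/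
/-- Abstract form of Lemma "ArbitraryPoint": for an invariant multiplicative cocycle
`b` and a map `g` fixing `x⁻` and `x⁺`, the function `y ↦ b(x⁻, y, x⁺, g y)` is
constant. -/
theorem crossRatio_basepoint_independent
    {X : Type*} (b : X → X → X → X → ℝ)
    (hcocycle : ∀ x y z t w : X, b x y z t = b x y z w * b x w z t)
    (g : X → X)
    (hinv : ∀ x y z t : X, b (g x) (g y) (g z) (g t) = b x y z t)
    (xm xp : X) (hxm : g xm = xm) (hxp : g xp = xp) :
    ∀ y z : X, b xm y xp (g y) = b xm z xp (g z) := by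
  intro y z
  have hgy : b xm (g y) xp (g z) = b xm y xp z := by
    have := hinv xm y xp z
    rwa [hxm, hxp] at this
  have h1 : b xm z xp (g z) = b xm z xp y * (b xm y xp (g y) * b xm y xp z) := by
    rw [hcocycle xm z xp (g z) y, hcocycle xm y xp (g z) (g y), hgy]
  have h2 : b xm y xp (g y) = b xm y xp y * b xm y xp (g y) :=
    hcocycle xm y xp (g y) y
  have h3 : b xm y xp y = b xm y xp z * b xm z xp y :=
    hcocycle xm y xp y z
  rw [h1]
  linear_combination h2 + b xm y xp (g y) * h3
end

section
/- Let b be a strict cross ratio on the unit circle S¹. Then for every triple of pairwise distinct points x, y, z ∈ S¹, the map t ↦ b(x,y,z,t), restricted to S¹ ∖ {z} with its subspace topology, is a homeomorphism onto ℝ; moreover it sends x to 0 and y to 1. -/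
/-!
Fix pairwise distinct `x, y, z` and put `f t = b x y z t` on `S¹ ∖ {z}`. By (a2) and (a4),
`f t = f s * b x s z t` with `b x s z t = 1` only for `s = t`, so `f` is injective; and
`f t * b x t z y = b x y z y = 1`, where `b x t z y → b x z z y = 0` as `t → z`, so `f` is proper.
Through stereographic projection `S¹ ∖ {z} ≃ₜ ℝ`, `f` becomes a continuous injective proper
self-map of `ℝ`: strictly monotone, hence surjective by the intermediate value theorem. A proper
continuous bijection is a homeomorphism.
-/

/-- The unit circle in `ℂ`, with its subspace topology. -/
def UnitCircle : Type := {z : ℂ // ‖z‖ = 1}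

noncomputable instance : TopologicalSpace UnitCircle :=
  instTopologicalSpaceSubtype

open Filter Topology Function Set Module

theorem Monotone.tendsto_atTop_of_tendsto_cocompact {α β : Type*} [Preorder α]
    [IsDirectedOrder α] [Nonempty α] [LinearOrder β] [TopologicalSpace β]
    [CompactIccSpace β] [NoMinOrder β] {g : α → β} (hg : Monotone g)
    (h : Tendsto g atTop (cocompact β)) : Tendsto g atTop atTop := by
  obtain ⟨a⟩ := ‹Nonempty α›
  refine tendsto_atTop.2 fun c => ?_
  have hlarge : Iio (min c (g a)) ∪ Ici c ∈ atBot ⊔ atTop :=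
    ⟨mem_of_superset (Iio_mem_atBot _) subset_union_left,
      mem_of_superset (Ici_mem_atTop _) subset_union_right⟩
  filter_upwards [h.mono_right cocompact_le_atBot_atTop hlarge, eventually_ge_atTop a]
    with r hr har
  exact hr.resolve_left fun hlt => (hg har).not_gt (hlt.trans_le (min_le_right _ _))

theorem Continuous.surjective_of_injective_of_tendsto_cocompact {g : ℝ → ℝ}
    (hc : Continuous g) (hinj : Injective g) (h : Tendsto g (cocompact ℝ) (cocompact ℝ)) :
    Surjective g := by
  have htop := h.mono_left atTop_le_cocompact
  have hbot := h.mono_left atBot_le_cocompact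
  rcases hc.strictMono_of_inj hinj with hm | ha
  · exact hc.surjective (hm.monotone.tendsto_atTop_of_tendsto_cocompact htop)
      (hm.monotone.dual.tendsto_atTop_of_tendsto_cocompact hbot)
  · exact hc.surjective' (ha.antitone.dual_left.tendsto_atTop_of_tendsto_cocompact hbot)
      (ha.antitone.dual_right.tendsto_atTop_of_tendsto_cocompact htop)

theorem isHomeomorph_of_injective_of_tendsto_cocompact {X : Type*} [TopologicalSpace X]
    (e : X ≃ₜ ℝ) {f : X → ℝ} (hc : Continuous f) (hinj : Injective f)
    (h : Tendsto f (cocompact X) (cocompact ℝ)) : IsHomeomorph f := by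
  have hsurj : Surjective (f ∘ e.symm) :=
    (hc.comp e.symm.continuous).surjective_of_injective_of_tendsto_cocompact
      (hinj.comp e.symm.injective) (h.comp e.symm.map_cocompact.le)
  exact isHomeomorph_iff_continuous_isClosedMap_bijective.2
    ⟨hc, (isProperMap_iff_tendsto_cocompact.2 ⟨hc, h⟩).isClosedMap, hinj, hsurj.of_comp⟩

theorem tendsto_subtype_val_cocompact_nhdsNE {X : Type*} [TopologicalSpace X] [CompactSpace X]
    (z : X) : Tendsto (Subtype.val : {t // t ≠ z} → X) (cocompact _) (𝓝[≠] z) := by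
  refine tendsto_nhdsWithin_iff.2 ⟨(nhds_basis_opens z).tendsto_right_iff.2 ?_,
    Eventually.of_forall fun t => t.2⟩
  rintro V ⟨hzV, hV⟩
  have hK : IsCompact ((↑) ⁻¹' Vᶜ : Set {t // t ≠ z}) :=
    IsInducing.subtypeVal.isCompact_preimage' hV.isClosed_compl.isCompact
      fun v hv => ⟨⟨v, fun hvz => hv (hvz ▸ hzV)⟩, rfl⟩
  filter_upwards [hK.compl_mem_cocompact] with t ht
  simpa using ht

section CrossRatio

variable {X : Type*} {b : X → X → X → X → ℝ}

theorem crossRatio_mul_crossRatio_eq_one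
    (ha2 : ∀ x y z t w : X, x ≠ y → z ≠ t → x ≠ w → z ≠ w →
      b x y z t = b x y z w * b x w z t)
    (ha4 : ∀ x y z t : X, x ≠ y → z ≠ t → (b x y z t = 1 ↔ x = z ∨ y = t))
    {x y z t : X} (hxy : x ≠ y) (hzy : z ≠ y) (htx : t ≠ x) (htz : t ≠ z) :
    b x y z t * b x t z y = 1 := by
  rw [← ha2 x y z y t hxy hzy htx.symm htz.symm]
  exact (ha4 x y z y hxy hzy).2 (Or.inr rfl)

theorem crossRatio_injective
    (ha2 : ∀ x y z t w : X, x ≠ y → z ≠ t → x ≠ w → z ≠ w →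
      b x y z t = b x y z w * b x w z t)
    (ha4 : ∀ x y z t : X, x ≠ y → z ≠ t → (b x y z t = 1 ↔ x = z ∨ y = t))
    (ha5 : ∀ x y z t : X, x ≠ y → z ≠ t → (b x y z t = 0 ↔ t = x ∨ z = y))
    {x y z : X} (hxy : x ≠ y) (hzy : z ≠ y) (hxz : x ≠ z) :
    Injective fun t : {t // t ≠ z} => b x y z t := by
  have hzero : ∀ t : {t // t ≠ z}, b x y z t = 0 ↔ t.val = x := fun t =>
    (ha5 x y z t hxy (Ne.symm t.2)).trans (or_iff_left hzy)
  rintro s t (hst : b x y z s = b x y z t)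
  by_cases hsx : s.val = x
  · exact Subtype.ext (hsx.trans ((hzero t).1 (hst ▸ (hzero s).2 hsx)).symm)
  have hs0 : b x y z s ≠ 0 := mt (hzero s).1 hsx
  have hone : b x s z t = 1 := by
    have := ha2 x y z t s hxy (Ne.symm t.2) (Ne.symm hsx) (Ne.symm s.2)
    rw [← hst] at this
    exact (mul_eq_left₀ hs0).1 this.symm
  exact Subtype.ext (((ha4 x s z t (Ne.symm hsx) (Ne.symm t.2)).1 hone).resolve_left hxz)

theorem tendsto_crossRatio_nhdsNE_cobounded [TopologicalSpace X] [T1Space X]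
    (hcont : ContinuousOn (fun p : X × X × X × X => b p.1 p.2.1 p.2.2.1 p.2.2.2)
      {p | p.1 ≠ p.2.1 ∧ p.2.2.1 ≠ p.2.2.2})
    (ha2 : ∀ x y z t w : X, x ≠ y → z ≠ t → x ≠ w → z ≠ w →
      b x y z t = b x y z w * b x w z t)
    (ha4 : ∀ x y z t : X, x ≠ y → z ≠ t → (b x y z t = 1 ↔ x = z ∨ y = t))
    (ha5 : ∀ x y z t : X, x ≠ y → z ≠ t → (b x y z t = 0 ↔ t = x ∨ z = y))
    {x y z : X} (hxy : x ≠ y) (hzy : z ≠ y) (hxz : x ≠ z) :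
    Tendsto (b x y z) (𝓝[≠] z) (Bornology.cobounded ℝ) := by
  have hne_x : ∀ᶠ s in 𝓝[≠] z, s ≠ x := nhdsWithin_le_nhds (eventually_ne_nhds hxz.symm)
  have hcontAt : ContinuousAt (fun s => b x s z y) z :=
    (hcont.comp (by fun_prop : Continuous fun s => (x, s, z, y)).continuousOn
      fun s (hs : s ≠ x) => ⟨hs.symm, hzy⟩).continuousAt (isOpen_ne.mem_nhds hxz.symm)
  have hvanish : Tendsto (fun s => b x s z y) (𝓝[≠] z) (𝓝[≠] 0) := by
    refine tendsto_nhdsWithin_iff.2 ⟨?_, ?_⟩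
    · have hz : b x z z y = 0 := (ha5 x z z y hxz hzy).2 (Or.inr rfl)
      exact hz ▸ hcontAt.tendsto.mono_left nhdsWithin_le_nhds
    · filter_upwards [hne_x, self_mem_nhdsWithin] with s hsx (hsz : s ≠ z)
      exact fun h0 => ((ha5 x s z y hsx.symm hzy).1 h0).elim hxy.symm hsz.symm
  refine (tendsto_inv₀_nhdsNE_zero.comp hvanish).congr' ?_
  filter_upwards [hne_x, self_mem_nhdsWithin] with s hsx (hsz : s ≠ z)
  exact (eq_inv_of_mul_eq_one_left (crossRatio_mul_crossRatio_eq_one ha2 ha4 hxy hzy hsx hsz)).symm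

end CrossRatio

namespace UnitCircle

noncomputable def homeomorphSphere : UnitCircle ≃ₜ Metric.sphere (0 : ℂ) 1 :=
  (Homeomorph.refl ℂ).subtype fun _ => by simp

instance : CompactSpace UnitCircle := homeomorphSphere.symm.compactSpace

instance : T2Space UnitCircle := homeomorphSphere.isEmbedding.t2Space

noncomputable def puncturedHomeomorphReal (z : UnitCircle) : {t : UnitCircle // t ≠ z} ≃ₜ ℝ :=
  have hz : ‖z.val‖ = 1 := z.property
  haveI : Fact (finrank ℝ ℂ = 1 + 1) := finrank_real_complex_fact'
  ((homeomorphSphere.subtype fun t => by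
      rw [stereographic_source, mem_compl_singleton_iff]
      exact (homeomorphSphere.injective.ne_iff' rfl).symm).trans
    (stereographic hz).toHomeomorphSourceTarget).trans <|
    ((Homeomorph.setCongr (stereographic_target hz)).trans (Homeomorph.Set.univ _)).trans
      (ContinuousLinearEquiv.ofFinrankEq (𝕜 := ℝ) (by
        rw [Submodule.finrank_orthogonal_span_singleton (n := 1)
          (norm_ne_zero_iff.mp (by rw [hz]; exact one_ne_zero)), finrank_self])).toHomeomorph

end UnitCircle

theorem strictCrossRatio_homeo_general
    (b : UnitCircle → UnitCircle → UnitCircle → UnitCircle → ℝ)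
    (hcont : ContinuousOn
      (fun p : UnitCircle × UnitCircle × UnitCircle × UnitCircle =>
        b p.1 p.2.1 p.2.2.1 p.2.2.2)
      {p | p.1 ≠ p.2.1 ∧ p.2.2.1 ≠ p.2.2.2})
    (ha2 : ∀ x y z t w : UnitCircle, x ≠ y → z ≠ t → x ≠ w → z ≠ w →
      b x y z t = b x y z w * b x w z t)
    (ha4 : ∀ x y z t : UnitCircle, x ≠ y → z ≠ t →
      (b x y z t = 1 ↔ x = z ∨ y = t))
    (ha5 : ∀ x y z t : UnitCircle, x ≠ y → z ≠ t →
      (b x y z t = 0 ↔ t = x ∨ z = y)) :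
    ∀ x y z : UnitCircle, x ≠ y → y ≠ z → x ≠ z →
      (∃ h : {t : UnitCircle // t ≠ z} ≃ₜ ℝ,
        ∀ t : {t : UnitCircle // t ≠ z}, h t = b x y z t.val) ∧
      b x y z x = 0 ∧ b x y z y = 1 := by
  intro x y z hxy hyz hxz
  have hproper : Tendsto (fun t : {t // t ≠ z} => b x y z t) (cocompact _) (cocompact ℝ) :=
    Metric.cobounded_eq_cocompact (α := ℝ) ▸
      (tendsto_crossRatio_nhdsNE_cobounded hcont ha2 ha4 ha5 hxy hyz.symm hxz).comp
        (tendsto_subtype_val_cocompact_nhdsNE z)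
  have hcontf : Continuous fun t : {t // t ≠ z} => b x y z t :=
    hcont.comp_continuous (f := fun t : {t // t ≠ z} => (x, y, z, t.val)) (by fun_prop)
      fun t => ⟨hxy, Ne.symm t.2⟩
  have hhomeo := isHomeomorph_of_injective_of_tendsto_cocompact
    (UnitCircle.puncturedHomeomorphReal z) hcontf
    (crossRatio_injective ha2 ha4 ha5 hxy hyz.symm hxz) hproper
  obtain ⟨h, hh⟩ := isHomeomorph_iff_exists_homeomorph.1 hhomeo
  exact ⟨⟨h, fun t => congrFun hh t⟩, (ha5 x y z x hxy hxz.symm).2 (Or.inl rfl),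
    (ha4 x y z y hxy hyz.symm).2 (Or.inr rfl)⟩

/-- Proposition "StrictCrHomeo": for a strict cross ratio `b` on the circle and
pairwise distinct points `x, y, z`, the map `t ↦ b x y z t` restricted to
`S¹ \ {z}` is a homeomorphism onto `ℝ` sending `x` to `0` and `y` to `1`. -/
theorem strictCrossRatio_homeo
    (b : UnitCircle → UnitCircle → UnitCircle → UnitCircle → ℝ)
    (hcont : ContinuousOn
      (fun p : UnitCircle × UnitCircle × UnitCircle × UnitCircle =>
        b p.1 p.2.1 p.2.2.1 p.2.2.2)
      {p | p.1 ≠ p.2.1 ∧ p.2.2.1 ≠ p.2.2.2})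
    (ha1 : ∀ x y z t : UnitCircle, x ≠ y → z ≠ t → b x y z t = b z t x y)
    (ha2 : ∀ x y z t w : UnitCircle, x ≠ y → z ≠ t → x ≠ w → z ≠ w →
      b x y z t = b x y z w * b x w z t)
    (ha3 : ∀ x y z t w : UnitCircle, x ≠ y → z ≠ t → w ≠ y → w ≠ t →
      b x y z t = b x y w t * b w y z t)
    (ha4 : ∀ x y z t : UnitCircle, x ≠ y → z ≠ t →
      (b x y z t = 1 ↔ x = z ∨ y = t))
    (ha5 : ∀ x y z t : UnitCircle, x ≠ y → z ≠ t →
      (b x y z t = 0 ↔ t = x ∨ z = y)) :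
    ∀ x y z : UnitCircle, x ≠ y → y ≠ z → x ≠ z →
      (∃ h : {t : UnitCircle // t ≠ z} ≃ₜ ℝ,
        ∀ t : {t : UnitCircle // t ≠ z}, h t = b x y z t.val) ∧
      b x y z x = 0 ∧ b x y z y = 1 :=
  strictCrossRatio_homeo_general b hcont ha2 ha4 ha5
end

section
/- Let b be a strict cross ratio on the unit circle S¹. Then for every triple of pairwise distinct points x, y, z ∈ S¹, the map t ↦ b(x,y,z,t) is injective on S¹ ∖ {z}: if a, c ∈ S¹ with a ≠ z, c ≠ z and b(x,y,z,a) = b(x,y,z,c), then a = c. -/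
section CrossRatio

variable {α : Type*} {b : α → α → α → α → ℝ} {x y z a c : α}

theorem crossRatio_eq_zero_iff
    (ha5 : ∀ x y z t : α, x ≠ y → z ≠ t → (b x y z t = 0 ↔ t = x ∨ z = y))
    (hxy : x ≠ y) (hyz : y ≠ z) (hza : z ≠ a) :
    b x y z a = 0 ↔ a = x := by
  rw [ha5 x y z a hxy hza, or_iff_left hyz.symm]

theorem crossRatio_injOn
    (ha2 : ∀ x y z t w : α, x ≠ y → z ≠ t → x ≠ w → z ≠ w →
      b x y z t = b x y z w * b x w z t)
    (ha4 : ∀ x y z t : α, x ≠ y → z ≠ t → (b x y z t = 1 ↔ x = z ∨ y = t))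
    (ha5 : ∀ x y z t : α, x ≠ y → z ≠ t → (b x y z t = 0 ↔ t = x ∨ z = y))
    (hxy : x ≠ y) (hyz : y ≠ z) (hxz : x ≠ z) (haz : a ≠ z) (hcz : c ≠ z)
    (h : b x y z a = b x y z c) : a = c := by
  have hzero {t : α} (htz : t ≠ z) := crossRatio_eq_zero_iff ha5 hxy hyz htz.symm
  by_cases hcx : c = x
  · subst hcx
    exact (hzero haz).1 (h.trans ((hzero hcz).2 rfl))
  · have hc : b x y z c ≠ 0 := mt (hzero hcz).1 hcx
    have hcocycle := ha2 x y z a c hxy haz.symm (Ne.symm hcx) hcz.symm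
    have hone : b x c z a = 1 := by
      rw [h] at hcocycle
      exact (mul_eq_left₀ hc).1 hcocycle.symm
    exact ((ha4 x c z a (Ne.symm hcx) haz.symm).1 hone).resolve_left hxz |>.symm

end CrossRatio

theorem strictCrossRatio_injective_general
    (b : UnitCircle → UnitCircle → UnitCircle → UnitCircle → ℝ)
    (ha2 : ∀ x y z t w : UnitCircle, x ≠ y → z ≠ t → x ≠ w → z ≠ w →
      b x y z t = b x y z w * b x w z t)
    (ha4 : ∀ x y z t : UnitCircle, x ≠ y → z ≠ t →
      (b x y z t = 1 ↔ x = z ∨ y = t))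
    (ha5 : ∀ x y z t : UnitCircle, x ≠ y → z ≠ t →
      (b x y z t = 0 ↔ t = x ∨ z = y)) :
    ∀ x y z : UnitCircle, x ≠ y → y ≠ z → x ≠ z →
      ∀ a c : UnitCircle, a ≠ z → c ≠ z →
        b x y z a = b x y z c → a = c :=
  fun _ _ _ hxy hyz hxz _ _ haz hcz => crossRatio_injOn ha2 ha4 ha5 hxy hyz hxz haz hcz

/-- For a strict cross ratio `b` on the circle and pairwise distinct points
`x, y, z`, the map `t ↦ b x y z t` is injective on `S¹ \ {z}`. -/
theorem strictCrossRatio_injective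
    (b : UnitCircle → UnitCircle → UnitCircle → UnitCircle → ℝ)
    (hcont : ContinuousOn
      (fun p : UnitCircle × UnitCircle × UnitCircle × UnitCircle =>
        b p.1 p.2.1 p.2.2.1 p.2.2.2)
      {p | p.1 ≠ p.2.1 ∧ p.2.2.1 ≠ p.2.2.2})
    (ha1 : ∀ x y z t : UnitCircle, x ≠ y → z ≠ t → b x y z t = b z t x y)
    (ha2 : ∀ x y z t w : UnitCircle, x ≠ y → z ≠ t → x ≠ w → z ≠ w →
      b x y z t = b x y z w * b x w z t)
    (ha3 : ∀ x y z t w : UnitCircle, x ≠ y → z ≠ t → w ≠ y → w ≠ t →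
      b x y z t = b x y w t * b w y z t)
    (ha4 : ∀ x y z t : UnitCircle, x ≠ y → z ≠ t →
      (b x y z t = 1 ↔ x = z ∨ y = t))
    (ha5 : ∀ x y z t : UnitCircle, x ≠ y → z ≠ t →
      (b x y z t = 0 ↔ t = x ∨ z = y)) :
    ∀ x y z : UnitCircle, x ≠ y → y ≠ z → x ≠ z →
      ∀ a c : UnitCircle, a ≠ z → c ≠ z →
        b x y z a = b x y z c → a = c :=
  strictCrossRatio_injective_general b ha2 ha4 ha5
end

section
/- Let V be a Euclidean Jordan algebra with unit e. Let d₁, …, d_m ∈ V be idempotents (dᵢ·dᵢ = dᵢ) that are pairwise orthogonal (dᵢ·dⱼ = 0 for i ≠ j) and satisfy d₁ + … + d_m = e. Then there exists a Jordan frame c₁, …, c_r of V and a partition of {1,…,r} into blocks indexed by {1,…,m} such that each dⱼ is the sum of the cᵢ in the j-th block. -/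
-- linearized Jordan identity
lemma jcLinB {V : Type*} [AddCommGroup V] [Module ℝ V]
    (mul : V →ₗ[ℝ] V →ₗ[ℝ] V)
    (hcomm : ∀ x y : V, mul x y = mul y x)
    (hjordan : ∀ x y : V, mul (mul x y) (mul x x) = mul x (mul y (mul x x)))
    (u z y : V) :
    mul (mul z y) (mul u u) + (2:ℝ) • mul (mul u y) (mul u z)
      = mul z (mul y (mul u u)) + (2:ℝ) • mul u (mul y (mul u z)) := by
  have h1 := hjordan (u+z) y
  have h2 := hjordan (u-z) y
  have h3 := hjordan z y
  simp only [map_add, map_sub, LinearMap.add_apply, LinearMap.sub_apply] at h1 h2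
  rw [hcomm z u] at h1 h2
  linear_combination (norm := module) ((1:ℝ)/2) • h1 - ((1:ℝ)/2) • h2 - h3

lemma jcComm {V : Type*} [AddCommGroup V] [Module ℝ V]
    (mul : V →ₗ[ℝ] V →ₗ[ℝ] V)
    (hcomm : ∀ x y : V, mul x y = mul y x)
    (hjordan : ∀ x y : V, mul (mul x y) (mul x x) = mul x (mul y (mul x x)))
    (u z : V) (hu : mul u u = u) (hz : mul u z = 0 ∨ mul u z = z) (y : V) :
    mul u (mul z y) = mul z (mul u y) := by
  have hB := jcLinB mul hcomm hjordan u z y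
  rw [hu] at hB
  rcases hz with hz | hz
  · rw [hz] at hB
    simp only [map_zero, smul_zero, LinearMap.zero_apply] at hB
    rw [hcomm (mul z y) u, hcomm y u] at hB
    linear_combination (norm := module) hB
  · rw [hz] at hB
    rw [hcomm (mul z y) u, hcomm (mul u y) z, hcomm y u, hcomm y z] at hB
    linear_combination (norm := module) -hB

lemma jcPeirce {V : Type*} [AddCommGroup V] [Module ℝ V]
    (mul : V →ₗ[ℝ] V →ₗ[ℝ] V)
    (hcomm : ∀ x y : V, mul x y = mul y x)
    (hjordan : ∀ x y : V, mul (mul x y) (mul x x) = mul x (mul y (mul x x)))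
    (u p w : V) (hu : mul u u = u) (hp : mul u p = p) (hw : mul u w = 0) :
    mul p w = 0 := by
  have h1 : mul w p = mul u (mul w p) := by
    conv_lhs => rw [← hp]
    rw [jcComm mul hcomm hjordan u w hu (Or.inl hw) p]
  have h2 : mul u (mul p w) = 0 := by
    have := jcComm mul hcomm hjordan u p hu (Or.inr hp) w
    rw [hw] at this
    rw [this, map_zero]
  rw [hcomm p w, h1, hcomm w p, h2]

-- if an idempotent is a sum of two idempotents, they are orthogonal
lemma jcSplitOrth {V : Type*} [AddCommGroup V] [Module ℝ V]
    (mul : V →ₗ[ℝ] V →ₗ[ℝ] V)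
    (hcomm : ∀ x y : V, mul x y = mul y x)
    (p q : V) (hp : mul p p = p) (hq : mul q q = q) (hpq : mul (p+q) (p+q) = p + q) :
    mul p q = 0 := by
  simp only [map_add, LinearMap.add_apply, hp, hq, hcomm q p] at hpq
  have h2 : (2:ℝ) • mul p q = 0 := by linear_combination (norm := module) hpq
  have := smul_eq_zero.mp h2
  simpa using this

lemma jcIndep {V : Type*} [AddCommGroup V] [Module ℝ V] [FiniteDimensional ℝ V]
    (mul : V →ₗ[ℝ] V →ₗ[ℝ] V) (m : ℕ) (d : Fin m → V)
    (hnz : ∀ i, d i ≠ 0)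
    (horth : ∀ i j, i ≠ j → mul (d i) (d j) = 0)
    (hid : ∀ i, mul (d i) (d i) = d i) :
    m ≤ Module.finrank ℝ V := by
  have hli : LinearIndependent ℝ d := by
    rw [Fintype.linearIndependent_iff]
    intro g hg j
    have h2 : mul (d j) (∑ i, g i • d i) = 0 := by rw [hg, map_zero]
    rw [map_sum] at h2
    simp only [map_smul] at h2
    rw [Finset.sum_eq_single j (fun i _ hij => by rw [horth j i (Ne.symm hij)]; simp)
      (by simp)] at h2
    rw [hid j] at h2
    rcases smul_eq_zero.mp h2 with h | h
    · exact h
    · exact absurd h (hnz j)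
  simpa using hli.fintype_card_le_finrank

lemma jcAux {V : Type*} [AddCommGroup V] [Module ℝ V] [FiniteDimensional ℝ V]
    (mul : V →ₗ[ℝ] V →ₗ[ℝ] V)
    (hcomm : ∀ x y : V, mul x y = mul y x)
    (hjordan : ∀ x y : V, mul (mul x y) (mul x x) = mul x (mul y (mul x x))) :
    ∀ (n m : ℕ) (d : Fin m → V) (e : V),
      (∀ i, d i ≠ 0) →
      (∀ i, mul (d i) (d i) = d i) →
      (∀ i j, i ≠ j → mul (d i) (d j) = 0) →
      (∑ i, d i = e) →
      Module.finrank ℝ V < m + n →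
      ∃ (r : ℕ) (c : Fin r → V) (f : Fin r → Fin m),
        (∀ i, c i ≠ 0) ∧
        (∀ i, mul (c i) (c i) = c i) ∧
        (∀ i, ¬ ∃ p q : V, p ≠ 0 ∧ q ≠ 0 ∧ mul p p = p ∧ mul q q = q ∧ c i = p + q) ∧
        (∀ i j, i ≠ j → mul (c i) (c j) = 0) ∧
        (∑ i, c i = e) ∧
        (∀ j, d j = ∑ i ∈ Finset.univ.filter (fun i => f i = j), c i) := by
  intro n
  induction n with
  | zero =>
    intro m d e hnz hid horth hsum hlt
    exact absurd (jcIndep mul m d hnz horth hid) (by omega)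
  | succ n ih =>
    intro m d e hnz hid horth hsum hlt
    by_cases hall : ∀ i, ¬ ∃ p q : V, p ≠ 0 ∧ q ≠ 0 ∧ mul p p = p ∧ mul q q = q ∧ d i = p + q
    · refine ⟨m, d, id, hnz, hid, hall, horth, hsum, fun j => ?_⟩
      simp [Finset.filter_eq']
    · push_neg at hall
      obtain ⟨i, p, q, hp0, hq0, hpp, hqq, hdi⟩ := hall
      have hpq : mul p q = 0 := jcSplitOrth mul hcomm p q hpp hqq (hdi ▸ hid i)
      have hdip : mul (d i) p = p := by
        rw [hdi]; simp [map_add, LinearMap.add_apply, hpp, hcomm q p, hpq]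
      have hdiq : mul (d i) q = q := by
        rw [hdi]; simp [map_add, LinearMap.add_apply, hqq, hpq]
      set dd : Fin m → V := Function.update d i p with hdd
      set d' : Fin (m+1) → V := Fin.snoc dd q with hd'
      have hddval : ∀ a : Fin m, a ≠ i → dd a = d a := fun a ha =>
        Function.update_of_ne ha _ _
      have hddi : dd i = p := Function.update_self _ _ _
      have hOq : ∀ a : Fin m, mul (dd a) q = 0 := by
        intro a
        by_cases ha : a = i
        · rw [ha, hddi]; exact hpq
        · rw [hddval a ha, hcomm]
          exact jcPeirce mul hcomm hjordan (d i) q (d a) (hid i) hdiq (horth i a (Ne.symm ha))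
      have hOdd : ∀ a b : Fin m, a ≠ b → mul (dd a) (dd b) = 0 := by
        intro a b hab
        by_cases ha : a = i
        · subst ha
          rw [hddi, hddval b (Ne.symm hab)]
          exact jcPeirce mul hcomm hjordan (d a) p (d b) (hid a) hdip (horth a b hab)
        · by_cases hb : b = i
          · subst hb
            rw [hddi, hddval a ha, hcomm]
            exact jcPeirce mul hcomm hjordan (d b) p (d a) (hid b) hdip (horth b a (Ne.symm ha))
          · rw [hddval a ha, hddval b hb]; exact horth a b hab
      have hnz' : ∀ k, d' k ≠ 0 := by
        intro k
        refine Fin.lastCases ?_ ?_ k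
        · simpa [hd'] using hq0
        · intro a
          simp only [hd', Fin.snoc_castSucc]
          by_cases ha : a = i
          · rw [ha, hddi]; exact hp0
          · rw [hddval a ha]; exact hnz a
      have hid' : ∀ k, mul (d' k) (d' k) = d' k := by
        intro k
        refine Fin.lastCases ?_ ?_ k
        · simpa [hd'] using hqq
        · intro a
          simp only [hd', Fin.snoc_castSucc]
          by_cases ha : a = i
          · rw [ha, hddi]; exact hpp
          · rw [hddval a ha]; exact hid a
      have horth' : ∀ k l, k ≠ l → mul (d' k) (d' l) = 0 := by
        intro k l
        refine Fin.lastCases ?_ ?_ k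
        · refine Fin.lastCases ?_ ?_ l
          · intro hkl; exact absurd rfl hkl
          · intro b _
            simp only [hd', Fin.snoc_castSucc, Fin.snoc_last]
            rw [hcomm]; exact hOq b
        · intro a
          refine Fin.lastCases ?_ ?_ l
          · intro _
            simp only [hd', Fin.snoc_castSucc, Fin.snoc_last]
            exact hOq a
          · intro b hab
            simp only [hd', Fin.snoc_castSucc]
            exact hOdd a b (fun h => hab (by rw [h]))
      have hsum' : ∑ k, d' k = e := by
        rw [Fin.sum_univ_castSucc]
        simp only [hd', Fin.snoc_castSucc, Fin.snoc_last]
        have h1 : ∑ a, dd a = p + ∑ x ∈ Finset.univ \ {i}, d x := by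
          rw [hdd]; exact Finset.sum_update_of_mem (Finset.mem_univ i) d p
        have h2 : ∑ x ∈ Finset.univ \ {i}, d x = e - d i := by
          rw [eq_sub_iff_add_eq, ← hsum, Finset.sdiff_singleton_eq_erase]
          exact Finset.sum_erase_add _ _ (Finset.mem_univ i)
        rw [h1, h2, hdi]
        abel
      obtain ⟨r, c, f', hc0, hcid, hcprim, hcorth, hcsum, hblk⟩ :=
        ih (m+1) d' e hnz' hid' horth' hsum' (by omega)
      set fmap : Fin (m+1) → Fin m := fun x => Fin.lastCases i (fun a => a) x with hfmap
      have hfm1 : ∀ a : Fin m, fmap (Fin.castSucc a) = a := by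
        intro a; rw [hfmap]; exact Fin.lastCases_castSucc a
      have hfm2 : fmap (Fin.last m) = i := by rw [hfmap]; exact Fin.lastCases_last
      refine ⟨r, c, fmap ∘ f', hc0, hcid, hcprim, hcorth, hcsum, ?_⟩
      intro j
      by_cases hji : j = i
      · have hfi : Finset.univ.filter (fun k => (fmap ∘ f') k = j)
            = Finset.univ.filter (fun k => f' k = Fin.castSucc j)
              ∪ Finset.univ.filter (fun k => f' k = Fin.last m) := by
          ext k
          simp only [Finset.mem_filter, Finset.mem_union, Finset.mem_univ, true_and,
            Function.comp_apply]
          constructor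
          · intro h
            rcases Fin.eq_castSucc_or_eq_last (f' k) with ⟨a, ha⟩ | ha
            · left
              rw [ha] at h ⊢
              rw [hfm1] at h
              rw [h]
            · right; exact ha
          · rintro (h | h) <;> rw [h]
            · exact hfm1 j
            · rw [hfm2, hji]
        have hdisj : Disjoint (Finset.univ.filter (fun k => f' k = Fin.castSucc j))
            (Finset.univ.filter (fun k => f' k = Fin.last m)) := by
          rw [Finset.disjoint_left]
          intro k hk1 hk2
          simp only [Finset.mem_filter] at hk1 hk2
          have hcl : Fin.castSucc j = Fin.last m := by rw [← hk1.2, hk2.2]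
          have := congrArg Fin.val hcl
          simp only [Fin.coe_castSucc, Fin.val_last] at this
          omega
        rw [hfi, Finset.sum_union hdisj, ← hblk (Fin.castSucc j), ← hblk (Fin.last m)]
        simp only [hd', Fin.snoc_castSucc, Fin.snoc_last]
        rw [hji, hddi, ← hji, hji, hdi]
      · have hfj : Finset.univ.filter (fun k => (fmap ∘ f') k = j)
            = Finset.univ.filter (fun k => f' k = Fin.castSucc j) := by
          ext k
          simp only [Finset.mem_filter, Finset.mem_univ, true_and, Function.comp_apply]
          constructor
          · intro h
            rcases Fin.eq_castSucc_or_eq_last (f' k) with ⟨a, ha⟩ | ha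
            · rw [ha] at h ⊢
              rw [hfm1] at h
              rw [h]
            · rw [ha, hfm2] at h
              exact absurd h.symm hji
          · intro h; rw [h]; exact hfm1 j
        rw [hfj, ← hblk (Fin.castSucc j)]
        simp only [hd', Fin.snoc_castSucc]
        rw [hddval j hji]


/-- Lemma "JordanCompletion": in a Euclidean (i.e. formally real) Jordan algebra,
any complete system of pairwise orthogonal idempotents can be refined to a Jordan
frame, with a partition of the frame into blocks summing to the given idempotents. -/
theorem jordan_frame_completion
    {V : Type*} [AddCommGroup V] [Module ℝ V] [FiniteDimensional ℝ V]
    (mul : V →ₗ[ℝ] V →ₗ[ℝ] V) (e : V)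
    (hcomm : ∀ x y : V, mul x y = mul y x)
    (hunit : ∀ x : V, mul e x = x)
    (hjordan : ∀ x y : V, mul (mul x y) (mul x x) = mul x (mul y (mul x x)))
    (hformally_real : ∀ x y : V, mul x x + mul y y = 0 → x = 0 ∧ y = 0)
    (m : ℕ) (d : Fin m → V)
    (hidem : ∀ i, mul (d i) (d i) = d i)
    (horth : ∀ i j, i ≠ j → mul (d i) (d j) = 0)
    (hsum : ∑ i, d i = e) :
    ∃ (r : ℕ) (c : Fin r → V) (f : Fin r → Fin m),
      -- `c` is a Jordan frame: primitive idempotents, ...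
      (∀ i, c i ≠ 0) ∧
      (∀ i, mul (c i) (c i) = c i) ∧
      (∀ i, ¬ ∃ p q : V, p ≠ 0 ∧ q ≠ 0 ∧ mul p p = p ∧ mul q q = q ∧ c i = p + q) ∧
      -- ... pairwise orthogonal, ...
      (∀ i j, i ≠ j → mul (c i) (c j) = 0) ∧
      -- ... summing to the unit;
      (∑ i, c i = e) ∧
      -- and each `d j` is the sum of the `c i` in the `j`-th block.
      (∀ j : Fin m, d j = ∑ i ∈ Finset.univ.filter (fun i => f i = j), c i) := by
  classical
  set s : Finset (Fin m) := Finset.univ.filter (fun i => d i ≠ 0) with hs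
  set g : Fin s.card ≃o {x // x ∈ s} := s.orderIsoOfFin rfl with hg
  set d₀ : Fin s.card → V := fun k => d (g k) with hd0
  have hmem : ∀ k, (g k : Fin m) ∈ s := fun k => (g k).2
  have hnz0 : ∀ k, d₀ k ≠ 0 := fun k => (Finset.mem_filter.mp (hmem k)).2
  have hid0 : ∀ k, mul (d₀ k) (d₀ k) = d₀ k := fun k => hidem _
  have hinj : ∀ k l, (g k : Fin m) = (g l : Fin m) → k = l := by
    intro k l h
    exact g.injective (Subtype.ext h)
  have horth0 : ∀ k l, k ≠ l → mul (d₀ k) (d₀ l) = 0 := by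
    intro k l hkl
    exact horth _ _ (fun h => hkl (hinj k l h))
  have hsum0 : ∑ k, d₀ k = e := by
    have h1 : ∑ k, d₀ k = ∑ x ∈ s, d x := by
      rw [← Finset.sum_coe_sort s d, ← Equiv.sum_comp g.toEquiv (fun x : {x // x ∈ s} => d x)]
      rfl
    rw [h1, hs, Finset.sum_filter_ne_zero, hsum]
  obtain ⟨r, c, f, hc0, hcid, hcprim, hcorth, hcsum, hblk⟩ :=
    jcAux mul hcomm hjordan (Module.finrank ℝ V + 1) s.card d₀ e hnz0 hid0 horth0 hsum0
      (by omega)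
  refine ⟨r, c, fun k => (g (f k) : Fin m), hc0, hcid, hcprim, hcorth, hcsum, ?_⟩
  intro j
  by_cases hj : d j = 0
  · have hempty : Finset.univ.filter (fun k => ((g (f k) : Fin m)) = j) = ∅ := by
      rw [Finset.filter_eq_empty_iff]
      intro k _
      intro h
      have := hmem (f k)
      rw [h] at this
      exact (Finset.mem_filter.mp this).2 hj
    rw [hempty, Finset.sum_empty, hj]
  · have hjs : j ∈ s := by rw [hs, Finset.mem_filter]; exact ⟨Finset.mem_univ j, hj⟩
    set j' : Fin s.card := g.symm ⟨j, hjs⟩ with hj'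
    have hgj : (g j' : Fin m) = j := by rw [hj', OrderIso.apply_symm_apply]
    have hfilt : Finset.univ.filter (fun k => ((g (f k) : Fin m)) = j)
        = Finset.univ.filter (fun k => f k = j') := by
      ext k
      simp only [Finset.mem_filter, Finset.mem_univ, true_and]
      constructor
      · intro h
        exact hinj (f k) j' (by rw [h, hgj])
      · intro h
        rw [h, hgj]
    rw [hfilt, ← hblk j']
    show d j = d ↑(g j')
    rw [hgj]
end

section
/- Let a group Γ act by isometries on a metric space X, and let F ⊆ X be a bounded subset such that the translates of F cover X (for every x ∈ X there is γ ∈ Γ with x ∈ γ·F). Let g ∈ Γ and let p ∈ X be arbitrary. Then there exists η ∈ Γ such that for every x ∈ F, d(x, (η g η⁻¹)·x) ≤ 2·diam(F) + d(p, g·p), where diam(F) denotes the (finite) diameter of F. -/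
/-!
Conjugating `g` by `γ⁻¹`, where `γ • F` contains `p`, turns the displacement of `x ∈ F` into the
displacement of `γ • x` under `g`. Since `γ • x` lies within `diam F` of `p`, and the displacement
function of an isometry is 2-Lipschitz, this is at most `d(p, g • p) + 2 diam F`.
-/

open Pointwise Metric

theorem dist_smul_self_le_dist_smul_self_add {M X : Type*} [PseudoMetricSpace X] [SMul M X]
    [IsIsometricSMul M X] (g : M) (x p : X) :
    dist x (g • x) ≤ dist p (g • p) + 2 * dist x p :=
  calc dist x (g • x) ≤ dist x p + dist p (g • p) + dist (g • p) (g • x) := dist_triangle4 _ _ _ _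
    _ = dist p (g • p) + 2 * dist x p := by rw [dist_smul, dist_comm p x]; ring

theorem dist_conj_smul_self {Γ X : Type*} [Group Γ] [PseudoMetricSpace X] [MulAction Γ X]
    [IsIsometricSMul Γ X] (η g : Γ) (x : X) :
    dist x ((η * g * η⁻¹) • x) = dist (η⁻¹ • x) (g • η⁻¹ • x) := by
  rw [← dist_smul η⁻¹, mul_smul, mul_smul, inv_smul_smul]

/-- Displacement estimate via conjugation into a "fundamental domain" (core of
Corollary "DiscTranslationLength"): if a group `Γ` acts by isometries on a metric
space `X` and the translates of a bounded set `F` cover `X`, then for every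
`g ∈ Γ` and `p ∈ X` there is `η ∈ Γ` with
`d(x, (η g η⁻¹) • x) ≤ 2 diam F + d(p, g • p)` for all `x ∈ F`. -/
theorem conjugate_displacement_bound
    {Γ : Type*} {X : Type*} [Group Γ] [MetricSpace X] [MulAction Γ X]
    (hiso : ∀ γ : Γ, ∀ x y : X, dist (γ • x) (γ • y) = dist x y)
    (F : Set X) (hF : Bornology.IsBounded F)
    (hcover : ∀ x : X, ∃ γ : Γ, x ∈ γ • F)
    (g : Γ) (p : X) :
    ∃ η : Γ, ∀ x ∈ F,
      dist x ((η * g * η⁻¹) • x) ≤ 2 * Metric.diam F + dist p (g • p) := by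
  have : IsIsometricSMul Γ X := ⟨fun γ => Isometry.of_dist_eq (hiso γ)⟩
  obtain ⟨γ, hpγ⟩ := hcover p
  have hp : γ⁻¹ • p ∈ F := Set.mem_smul_set_iff_inv_smul_mem.1 hpγ
  refine ⟨γ⁻¹, fun x hx => ?_⟩
  calc dist x ((γ⁻¹ * g * γ⁻¹⁻¹) • x) = dist (γ • x) (g • γ • x) := by
        rw [dist_conj_smul_self, inv_inv]
    _ ≤ dist p (g • p) + 2 * dist (γ • x) p := dist_smul_self_le_dist_smul_self_add g _ p
    _ = dist p (g • p) + 2 * dist x (γ⁻¹ • p) := by rw [← dist_smul γ⁻¹ (γ • x) p, inv_smul_smul]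
    _ ≤ dist p (g • p) + 2 * diam F := by gcongr; exact dist_le_diam_of_mem hF hx hp
    _ = 2 * diam F + dist p (g • p) := add_comm _ _
end

section
/- Let n be a positive integer, let g, h be invertible n × n real matrices, let X be a symmetric n × n real matrix whose Frobenius norm is 1 (i.e. the sum of the squares of its entries equals 1), and let d ≥ 0 be a real number. Suppose h · exp(d·X) · hᵀ = g · h · hᵀ · gᵀ, where exp denotes the matrix exponential and ᵀ the transpose. Then |log((det g)²)| ≤ d·√n; equivalently, d ≥ |log((det g)²)|/√n. -/
/-!
Taking determinants in `h · exp(d X) · hᵀ = g · h hᵀ · gᵀ` and cancelling `(det h)²` gives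
`exp (d · tr X) = (det g)²`, since `det (exp A) = exp (tr A)` for symmetric `A` (diagonalise `A`
by an orthogonal matrix). Hence `|log (det g)²| = d · |tr X|`, and Cauchy–Schwarz on the diagonal
gives `(tr X)² ≤ n · ∑ᵢ X_ii² ≤ n · ∑ᵢⱼ X_ij² = n`.
-/

open Matrix

theorem Matrix.IsHermitian.det_exp {𝕜 : Type*} [RCLike 𝕜] {n : Type*} [Fintype n]
    [DecidableEq n] {A : Matrix n n 𝕜} (hA : A.IsHermitian) :
    (NormedSpace.exp A).det = NormedSpace.exp A.trace := by
  set U := Unitary.toUnits hA.eigenvectorUnitary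
  have hA' : A = (U : Matrix n n 𝕜) * diagonal (RCLike.ofReal ∘ hA.eigenvalues) *
      (↑U⁻¹ : Matrix n n 𝕜) := by
    simpa [U, Unitary.star_eq_inv] using hA.spectral_theorem
  rw [hA', exp_units_conj, det_units_conj, trace_units_conj, exp_diagonal, Pi.exp_def,
    det_diagonal, trace_diagonal, NormedSpace.exp_sum]

theorem Matrix.trace_sq_le_card_mul_sum_sq {R : Type*} [Ring R] [LinearOrder R]
    [IsStrictOrderedRing R] {n : Type*} [Fintype n] (A : Matrix n n R) :
    A.trace ^ 2 ≤ Fintype.card n * ∑ i, ∑ j, A i j ^ 2 := by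
  have hdiag : ∑ i, A i i ^ 2 ≤ ∑ i, ∑ j, A i j ^ 2 :=
    Finset.sum_le_sum fun i _ ↦
      Finset.single_le_sum (f := fun j ↦ A i j ^ 2) (fun j _ ↦ sq_nonneg _) (Finset.mem_univ i)
  calc A.trace ^ 2 ≤ Fintype.card n * ∑ i, A i i ^ 2 := sq_sum_le_card_mul_sum_sq
    _ ≤ Fintype.card n * ∑ i, ∑ j, A i j ^ 2 := by gcongr

theorem Matrix.exp_trace_eq_det_sq_of_mul_exp_mul_transpose_eq {n : Type*} [Fintype n]
    [DecidableEq n] {g h X : Matrix n n ℝ} (hh : IsUnit h.det) (hX : X.IsSymm)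
    (heq : h * NormedSpace.exp X * hᵀ = g * h * hᵀ * gᵀ) :
    Real.exp X.trace = g.det ^ 2 := by
  have hdet := congrArg det heq
  simp only [det_mul, det_transpose, (isHermitian_iff_isSymm.mpr hX).det_exp,
    ← Real.exp_eq_exp_ℝ] at hdet
  apply mul_right_cancel₀ (mul_ne_zero hh.ne_zero hh.ne_zero)
  linear_combination hdet

theorem log_det_sq_le_dist_general
    (n : ℕ)
    (g h X : Matrix (Fin n) (Fin n) ℝ)
    (hh : IsUnit h.det)
    (hX : X.IsSymm)
    (hXnorm : ∑ i : Fin n, ∑ j : Fin n, (X i j) ^ 2 = 1)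
    (d : ℝ) (hd : 0 ≤ d)
    (heq : h * NormedSpace.exp (d • X) * h.transpose =
      g * h * h.transpose * g.transpose) :
    |Real.log ((g.det) ^ 2)| ≤ d * Real.sqrt n := by
  have htrace : |X.trace| ≤ Real.sqrt n := by
    apply Real.abs_le_sqrt
    simpa [hXnorm] using X.trace_sq_le_card_mul_sum_sq
  rw [← exp_trace_eq_det_sq_of_mul_exp_mul_transpose_eq hh (hX.smul d) heq, Real.log_exp,
    trace_smul, smul_eq_mul, abs_mul, abs_of_nonneg hd]
  gcongr

/-- Linear-algebraic core of Lemma "PVEstimate": if a unit-speed geodesic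
`t ↦ h · exp(t X) · hᵀ` in the space of positive definite matrices joins `p = h hᵀ`
to `g p gᵀ` at time `d`, then `d ≥ |log (det g)²| / √n`. -/
theorem log_det_sq_le_dist
    (n : ℕ) (hn : 0 < n)
    (g h X : Matrix (Fin n) (Fin n) ℝ)
    (hg : IsUnit g.det) (hh : IsUnit h.det)
    (hX : X.IsSymm)
    (hXnorm : ∑ i : Fin n, ∑ j : Fin n, (X i j) ^ 2 = 1)
    (d : ℝ) (hd : 0 ≤ d)
    (heq : h * NormedSpace.exp (d • X) * h.transpose =
      g * h * h.transpose * g.transpose) :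
    |Real.log ((g.det) ^ 2)| ≤ d * Real.sqrt n :=
  log_det_sq_le_dist_general n g h X hh hX hXnorm d hd heq
end
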